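/- Let p_n, m be positive integers, and let H_1, ..., H_h be blocks of indices each of cardinality at most p_n. For a sub-linear expectation E with B_n > 0, if (p_n/B_n²) Σ_{j} E[(X_j² - ε²B_n²/p_n²)⁺] → 0 for all ε > 0 (sum over all indices), then with Y_i = Σ_{j∈H_i} X_j we have (1/B_n²) Σ_{i=1}^h E[(Y_i² - ε²B_n²)⁺] → 0 for all ε > 0. -/

import Mathlib

/-!
Pointwise, Cauchy–Schwarz gives `(∑ x_j)² - c ≤ p ∑ x_j² - c ≤ ∑ p (x_j² - c/p²)⁺` for a block
of at most `p` indices. Monotonicity, sub-additivity and positive homogeneity of `E` turn this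
into a bound of each block term by `p` times the individual terms of that block, and since the
blocks are disjoint, summing over the blocks stays below `p` times the full Lindeberg sum.
-/

open Filter Finset

/-- A sub-linear expectation on the space of all real random variables on `Ω`. -/
structure SLE (Ω : Type*) where
  E : (Ω → ℝ) → ℝ
  mono : ∀ X Y : Ω → ℝ, (∀ ω, X ω ≤ Y ω) → E X ≤ E Y
  const : ∀ c : ℝ, E (fun _ => c) = c
  subadd : ∀ X Y : Ω → ℝ, E (X + Y) ≤ E X + E Y
  homog : ∀ (l : ℝ) (X : Ω → ℝ), 0 ≤ l → E (l • X) = l * E X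

/-- The conjugate (lower) expectation. -/
def SLE.e {Ω : Type*} (ℰ : SLE Ω) (X : Ω → ℝ) : ℝ := - ℰ.E (-X)

open Function

lemma max_sq_sum_sub_le_sum_mul_max {ι : Type*} (s : Finset ι) (x : ι → ℝ) {p c : ℝ}
    (hs : (#s : ℝ) ≤ p) (hc : 0 ≤ c) :
    max ((∑ j ∈ s, x j) ^ 2 - c) 0 ≤ ∑ j ∈ s, p * max (x j ^ 2 - c / p ^ 2) 0 := by
  have hp : 0 ≤ p := (Nat.cast_nonneg _).trans hs
  have hcard : (#s : ℝ) * (p * (c / p ^ 2)) ≤ c := by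
    rcases hp.eq_or_lt with rfl | hp
    · simpa using hc
    · rw [show p * (c / p ^ 2) = c / p by field_simp]
      exact (mul_div_assoc' _ _ _).trans_le (div_le_of_le_mul₀ hp.le hc (by nlinarith))
  refine max_le ?_ (sum_nonneg fun j _ => mul_nonneg hp (le_max_right _ _))
  calc (∑ j ∈ s, x j) ^ 2 - c
      ≤ p * ∑ j ∈ s, x j ^ 2 - #s * (p * (c / p ^ 2)) := by
        have := mul_le_mul_of_nonneg_right hs (sum_nonneg fun j (_ : j ∈ s) => sq_nonneg (x j))
        linarith [sq_sum_le_card_mul_sum_sq (s := s) (f := x)]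
    _ = ∑ j ∈ s, p * (x j ^ 2 - c / p ^ 2) := by
        simp only [mul_sub, sum_sub_distrib, ← mul_sum, sum_const, nsmul_eq_mul]
        ring
    _ ≤ ∑ j ∈ s, p * max (x j ^ 2 - c / p ^ 2) 0 :=
        sum_le_sum fun j _ => mul_le_mul_of_nonneg_left (le_max_left _ _) hp

lemma sum_sum_le_sum_of_pairwiseDisjoint {ι κ : Type*} [Fintype κ] {H : κ → Finset ι}
    {t : Finset ι} (hdisj : Pairwise (Disjoint on H)) (hsub : ∀ i, H i ⊆ t) {g : ι → ℝ}
    (hg : ∀ j, 0 ≤ g j) :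
    ∑ i, ∑ j ∈ H i, g j ≤ ∑ j ∈ t, g j := by
  classical
  rw [← sum_biUnion fun i _ j _ hij => hdisj hij]
  exact sum_le_sum_of_subset_of_nonneg (biUnion_subset.2 fun i _ => hsub i) fun j _ _ => hg j

namespace SLE

variable {Ω : Type*} (ℰ : SLE Ω)

lemma E_nonneg {X : Ω → ℝ} (hX : ∀ ω, 0 ≤ X ω) : 0 ≤ ℰ.E X :=
  ℰ.const 0 ▸ ℰ.mono _ X hX

lemma E_const_mul {l : ℝ} (hl : 0 ≤ l) (X : Ω → ℝ) :
    ℰ.E (fun ω => l * X ω) = l * ℰ.E X :=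
  ℰ.homog l X hl

lemma E_sum_le {ι : Type*} (s : Finset ι) (f : ι → Ω → ℝ) :
    ℰ.E (fun ω => ∑ j ∈ s, f j ω) ≤ ∑ j ∈ s, ℰ.E (f j) := by
  classical
  induction s using Finset.cons_induction with
  | empty => simp [ℰ.const]
  | cons a s ha ih =>
    simp only [sum_cons]
    exact (ℰ.subadd (f a) fun ω => ∑ j ∈ s, f j ω).trans (by linarith)

lemma E_max_sq_sum_sub_le {ι : Type*} (s : Finset ι) (X : ι → Ω → ℝ) {p c : ℝ}
    (hs : (#s : ℝ) ≤ p) (hc : 0 ≤ c) :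
    ℰ.E (fun ω => max ((∑ j ∈ s, X j ω) ^ 2 - c) 0)
      ≤ p * ∑ j ∈ s, ℰ.E (fun ω => max (X j ω ^ 2 - c / p ^ 2) 0) := by
  have hp : 0 ≤ p := (Nat.cast_nonneg _).trans hs
  calc ℰ.E (fun ω => max ((∑ j ∈ s, X j ω) ^ 2 - c) 0)
      ≤ ℰ.E (fun ω => ∑ j ∈ s, p * max (X j ω ^ 2 - c / p ^ 2) 0) :=
        ℰ.mono _ _ fun ω => max_sq_sum_sub_le_sum_mul_max s (X · ω) hs hc
    _ ≤ ∑ j ∈ s, ℰ.E (fun ω => p * max (X j ω ^ 2 - c / p ^ 2) 0) := ℰ.E_sum_le _ _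
    _ = p * ∑ j ∈ s, ℰ.E (fun ω => max (X j ω ^ 2 - c / p ^ 2) 0) := by
        simp only [ℰ.E_const_mul hp, mul_sum]

lemma sum_E_max_sq_block_sub_le {ι κ : Type*} [Fintype κ] (X : ι → Ω → ℝ) {H : κ → Finset ι}
    {t : Finset ι} (hdisj : Pairwise (Disjoint on H)) (hsub : ∀ i, H i ⊆ t) {p c : ℝ}
    (hp : 0 ≤ p) (hcard : ∀ i, (#(H i) : ℝ) ≤ p) (hc : 0 ≤ c) :
    ∑ i, ℰ.E (fun ω => max ((∑ j ∈ H i, X j ω) ^ 2 - c) 0)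
      ≤ p * ∑ j ∈ t, ℰ.E (fun ω => max (X j ω ^ 2 - c / p ^ 2) 0) := by
  calc ∑ i, ℰ.E (fun ω => max ((∑ j ∈ H i, X j ω) ^ 2 - c) 0)
      ≤ p * ∑ i, ∑ j ∈ H i, ℰ.E (fun ω => max (X j ω ^ 2 - c / p ^ 2) 0) := by
        rw [mul_sum]
        exact sum_le_sum fun i _ => ℰ.E_max_sq_sum_sub_le (H i) X (hcard i) hc
    _ ≤ p * ∑ j ∈ t, ℰ.E (fun ω => max (X j ω ^ 2 - c / p ^ 2) 0) :=
        mul_le_mul_of_nonneg_left (sum_sum_le_sum_of_pairwiseDisjoint hdisj hsub fun j =>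
          ℰ.E_nonneg fun ω => le_max_right _ _) hp

end SLE

theorem stmt_17_general {Ω : Type} (ℰ : SLE Ω) (kn : ℕ → ℕ) (X : ℕ → ℕ → Ω → ℝ)
    (p : ℕ → ℕ) (B : ℕ → ℝ)
    (h : ℕ → ℕ) (H : (n : ℕ) → Fin (h n) → Finset ℕ)
    (hsub : ∀ n i, H n i ⊆ Finset.Icc 1 (kn n))
    (hdisj : ∀ n, ∀ i j : Fin (h n), i ≠ j → Disjoint (H n i) (H n j))
    (hcard : ∀ n i, (H n i).card ≤ p n)
    (hLind : ∀ ε : ℝ, 0 < ε → Filter.Tendsto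
      (fun n => ((p n : ℝ) / (B n) ^ 2) * ∑ j ∈ Finset.Icc 1 (kn n),
        ℰ.E (fun ω => max ((X n j ω) ^ 2 - ε ^ 2 * (B n) ^ 2 / (p n : ℝ) ^ 2) 0))
      Filter.atTop (nhds 0)) :
    ∀ ε : ℝ, 0 < ε → Filter.Tendsto
      (fun n => (1 / (B n) ^ 2) * ∑ i : Fin (h n),
        ℰ.E (fun ω => max ((∑ j ∈ H n i, X n j ω) ^ 2 - ε ^ 2 * (B n) ^ 2) 0))
      Filter.atTop (nhds 0) := by
  intro ε hε
  refine tendsto_of_tendsto_of_tendsto_of_le_of_le tendsto_const_nhds (hLind ε hε)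
    (fun n => mul_nonneg (by positivity) (sum_nonneg fun i _ =>
      ℰ.E_nonneg fun ω => le_max_right _ _)) fun n => ?_
  have hblocks := ℰ.sum_E_max_sq_block_sub_le (X n) (hdisj n) (hsub n) (Nat.cast_nonneg _)
    (fun i => (Nat.cast_le.2 (hcard n i) : (#(H n i) : ℝ) ≤ p n))
    (by positivity : 0 ≤ ε ^ 2 * B n ^ 2)
  calc (1 / B n ^ 2) * _ ≤ (1 / B n ^ 2) * _ := mul_le_mul_of_nonneg_left hblocks (by positivity)
    _ = _ := by ring

/-- Lindeberg condition transfers from the individual variables to the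
block sums `Y_i = Σ_{j∈H_i} X_j`, when each block has at most `p_n` elements. -/
theorem stmt_17 {Ω : Type} (ℰ : SLE Ω) (kn : ℕ → ℕ) (X : ℕ → ℕ → Ω → ℝ)
    (p : ℕ → ℕ) (hp : ∀ n, 0 < p n) (B : ℕ → ℝ) (hB : ∀ n, 0 < B n)
    (h : ℕ → ℕ) (H : (n : ℕ) → Fin (h n) → Finset ℕ)
    (hsub : ∀ n i, H n i ⊆ Finset.Icc 1 (kn n))
    (hdisj : ∀ n, ∀ i j : Fin (h n), i ≠ j → Disjoint (H n i) (H n j))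
    (hcard : ∀ n i, (H n i).card ≤ p n)
    (hLind : ∀ ε : ℝ, 0 < ε → Filter.Tendsto
      (fun n => ((p n : ℝ) / (B n) ^ 2) * ∑ j ∈ Finset.Icc 1 (kn n),
        ℰ.E (fun ω => max ((X n j ω) ^ 2 - ε ^ 2 * (B n) ^ 2 / (p n : ℝ) ^ 2) 0))
      Filter.atTop (nhds 0)) :
    ∀ ε : ℝ, 0 < ε → Filter.Tendsto
      (fun n => (1 / (B n) ^ 2) * ∑ i : Fin (h n),
        ℰ.E (fun ω => max ((∑ j ∈ H n i, X n j ω) ^ 2 - ε ^ 2 * (B n) ^ 2) 0))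
      Filter.atTop (nhds 0) :=
  stmt_17_general ℰ kn X p B h H hsub hdisj hcard hLind
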